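/- arXiv:1703.07965 — 3 statements merged into one kernel-verified Lean document; each statement's English description precedes it below -/
import Mathlib

section
/- Let $p \geq 2$ and $\alpha_j^p = \frac{(-1)^{j+1} p (p+j)!}{(p-j-1)!(2j+2)!}$ for $1 \leq j \leq p-1$. Then for all real $x$, $\sum_{j=1}^{p-1} \alpha_j^p x^j = \frac{p^2}{2} + \frac{T_p(1 - x/2) - 1}{x}$ for $x \neq 0$, where $T_p$ denotes the Chebyshev polynomial of the first kind of degree $p$. -/
/-- Coefficients of the local time-stepping scheme in closed form. -/
noncomputable def alphaLTS (p j : ℕ) : ℝ :=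
  (-1 : ℝ) ^ (j + 1) * (p : ℝ) * (Nat.factorial (p + j)) /
    ((Nat.factorial (p - j - 1)) * (Nat.factorial (2 * j + 2)))

/-!
Taylor-expand `T_p` at `1`: the Chebyshev differential equation gives
`T_p⁽ᵏ⁾(1) = ∏_{l<k} (p² - l²) / ∏_{l<k} (2l + 1)`. Evaluating at
`h = -x/2` and using `(2k)! = 2ᵏ k! ∏_{l<k} (2l + 1)`, the coefficient of `xᵏ` in `T_p(1 - x/2)`
is `(-1)ᵏ ∏_{l<k} (p² - l²) / (2k)!`, which is `1` for `k = 0`, `-p²/2` for `k = 1` and, since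
`∏_{l<k} (p² - l²) = p (p + k - 1)! / (p - k)!`, equals `α_{k-1}^p` for `2 ≤ k ≤ p`.
-/

open Polynomial Finset Nat

theorem Nat.factorial_two_mul_eq_prod_odd (k : ℕ) :
    (2 * k)! = 2 ^ k * k ! * ∏ l ∈ range k, (2 * l + 1) := by
  induction k with
  | zero => rfl
  | succ k ih =>
    rw [show 2 * (k + 1) = 2 * k + 1 + 1 by ring, factorial_succ, factorial_succ, ih,
      factorial_succ, prod_range_succ]
    ring

theorem Nat.factorial_sub_mul_prod_sub_mul_add {p k : ℕ} (hk : k ≤ p + 1) :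
    (p + 1 - k)! * ∏ l ∈ range k, (p + 1 - l) * (p + 1 + l) = (p + 1) * (p + k)! := by
  rw [prod_mul_distrib, ← descFactorial_eq_prod_range, ← ascFactorial_eq_prod_range, ← mul_assoc,
    factorial_mul_descFactorial hk, factorial_succ, mul_assoc, factorial_mul_ascFactorial]

theorem Polynomial.eval_add_eq_sum_range_iterate_derivative {𝔽 : Type*} [Field 𝔽] [CharZero 𝔽]
    {f : 𝔽[X]} {N : ℕ} (hN : f.natDegree < N) (x h : 𝔽) :
    f.eval (x + h) = ∑ k ∈ range N, (derivative^[k] f).eval x / k ! * h ^ k := by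
  rw [add_comm, ← taylor_eval, eval_eq_sum_range' ((natDegree_taylor f x).symm ▸ hN)]
  refine sum_congr rfl fun k _ => ?_
  have hk : (k ! : 𝔽) * (hasseDeriv k f).eval x = (derivative^[k] f).eval x := by
    rw [← factorial_smul_hasseDeriv, LinearMap.smul_apply, eval_smul, nsmul_eq_mul]
  rw [taylor_coeff, ← hk, mul_div_cancel_left₀ _ (cast_ne_zero.2 k.factorial_ne_zero)]

namespace Polynomial.Chebyshev

variable (𝔽 : Type*) [Field 𝔽]

noncomputable def coeffOneSubHalf (n k : ℕ) : 𝔽 :=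
  (-1) ^ k * (∏ l ∈ range k, ((n : 𝔽) ^ 2 - l ^ 2)) / (2 * k)!

@[simp]
theorem coeffOneSubHalf_zero (n : ℕ) : coeffOneSubHalf 𝔽 n 0 = 1 := by
  simp [coeffOneSubHalf]

@[simp]
theorem coeffOneSubHalf_one (n : ℕ) : coeffOneSubHalf 𝔽 n 1 = -(n ^ 2 / 2) := by
  simp [coeffOneSubHalf, neg_div]

variable {𝔽} [CharZero 𝔽]

theorem T_eval_one_add (n : ℕ) (h : 𝔽) :
    (T 𝔽 n).eval (1 + h) = ∑ k ∈ range (n + 1),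
      (∏ l ∈ range k, ((n : 𝔽) ^ 2 - l ^ 2)) / (∏ l ∈ range k, (2 * l + 1 : 𝔽)) / k ! * h ^ k := by
  have hdeg : (T 𝔽 n).natDegree < n + 1 := by simp [natDegree_T]
  rw [eval_add_eq_sum_range_iterate_derivative hdeg]
  refine sum_congr rfl fun k _ => ?_
  rw [iterate_derivative_T_eval_one_eq_div]
  push_cast
  rfl

theorem T_eval_one_sub_div_two (n : ℕ) (x : 𝔽) :
    (T 𝔽 n).eval (1 - x / 2) = ∑ k ∈ range (n + 1), coeffOneSubHalf 𝔽 n k * x ^ k := by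
  rw [sub_eq_add_neg, T_eval_one_add]
  refine sum_congr rfl fun k _ => ?_
  have hodd : (∏ l ∈ range k, (2 * l + 1 : 𝔽)) ≠ 0 := prod_ne_zero_iff.2 fun l _ => by norm_cast
  have hk : (k ! : 𝔽) ≠ 0 := cast_ne_zero.2 k.factorial_ne_zero
  rw [coeffOneSubHalf, factorial_two_mul_eq_prod_odd]
  push_cast
  field_simp
  rw [mul_assoc, ← mul_pow, show -(x / 2) * 2 = -1 * x by ring, mul_pow, mul_assoc]

end Polynomial.Chebyshev

open Polynomial.Chebyshev

theorem alphaLTS_eq_coeffOneSubHalf {p j : ℕ} (hj : j < p) :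
    alphaLTS p j = coeffOneSubHalf ℝ p (j + 1) := by
  obtain ⟨q, rfl⟩ : ∃ q, p = q + 1 := ⟨p - 1, by omega⟩
  have hprod : ∏ l ∈ range (j + 1), (((q + 1 : ℕ) : ℝ) ^ 2 - l ^ 2)
      = ((∏ l ∈ range (j + 1), (q + 1 - l) * (q + 1 + l) : ℕ) : ℝ) := by
    push_cast
    refine prod_congr rfl fun l hl => ?_
    rw [Nat.cast_sub (by have := mem_range.1 hl; omega)]
    push_cast
    ring
  have hf : ((q + 1 - (j + 1))! : ℝ) ≠ 0 := cast_ne_zero.2 (factorial_ne_zero _)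
  have hfact : ((∏ l ∈ range (j + 1), (q + 1 - l) * (q + 1 + l) : ℕ) : ℝ)
      = ((q + 1) * (q + (j + 1))! : ℕ) / (q + 1 - (j + 1))! := by
    refine eq_div_of_mul_eq hf ?_
    rw [mul_comm, ← Nat.cast_mul, factorial_sub_mul_prod_sub_mul_add (by omega)]
  rw [alphaLTS, coeffOneSubHalf, hprod, hfact, Nat.sub_sub,
    show q + 1 + j = q + (j + 1) by ring, show 2 * j + 2 = 2 * (j + 1) by ring]
  push_cast
  ring

theorem alphaLTS_generating_function (p : ℕ) (hp : 2 ≤ p) (x : ℝ) (hx : x ≠ 0) :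
    ∑ j ∈ Finset.Icc 1 (p - 1), alphaLTS p j * x ^ j =
      (p : ℝ) ^ 2 / 2 +
        ((Polynomial.Chebyshev.T ℝ (p : ℤ)).eval (1 - x / 2) - 1) / x := by
  obtain ⟨q, rfl⟩ : ∃ q, p = q + 2 := ⟨p - 2, by omega⟩
  have hα : ∀ k ∈ range (q + 1), alphaLTS (q + 2) (1 + k) * x ^ (1 + k) =
      x⁻¹ * (coeffOneSubHalf ℝ (q + 2) (k + 1 + 1) * x ^ (k + 1 + 1)) := by
    intro k hk
    rw [alphaLTS_eq_coeffOneSubHalf (by have := mem_range.1 hk; omega), add_comm 1 k]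
    field_simp
    ring
  rw [T_eval_one_sub_div_two, sum_range_succ', sum_range_succ', coeffOneSubHalf_zero,
    coeffOneSubHalf_one, ← Ico_add_one_right_eq_Icc, sum_Ico_eq_sum_range,
    show q + 2 - 1 + 1 - 1 = q + 1 by omega, sum_congr rfl hα, ← mul_sum]
  field_simp
  ring
end

section
/- Let $p \geq 2$ and $\alpha_j^p = \frac{(-1)^{j+1} p (p+j)!}{(p-j-1)!(2j+2)!}$ for $1 \leq j \leq p-1$. Then for all $\kappa \in (0, 4p^2]$, we have $\left|\frac{2}{p^2} \sum_{j=1}^{p-1} \alpha_j^p \left(\frac{\kappa}{p^2}\right)^{j-1}\right| \leq \frac{p^2 - 1}{12}$. -/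
open Finset Polynomial Polynomial.Chebyshev
open scoped Nat

theorem Polynomial.eval_eq_sum_range_iterate_derivative {K : Type*} [Field K] [CharZero K]
    {f : K[X]} {n : ℕ} (hn : f.natDegree ≤ n) (r y : K) :
    f.eval y = ∑ k ∈ range (n + 1), (derivative^[k] f).eval r / k ! * (y - r) ^ k := by
  have h := eval_eq_sum_range' (p := taylor r f) (n := n + 1) (by rw [natDegree_taylor]; omega)
    (y - r)
  rw [taylor_eval, sub_add_cancel] at h
  rw [h]
  refine sum_congr rfl fun k _ => ?_
  rw [taylor_coeff, ← congr_fun (factorial_smul_hasseDeriv k) f, LinearMap.smul_apply, eval_smul,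
    nsmul_eq_mul, mul_div_cancel_left₀ _ (Nat.cast_ne_zero.mpr k.factorial_ne_zero)]

theorem Polynomial.iteratedDeriv_eval {𝕜 : Type*} [NontriviallyNormedField 𝕜] (f : 𝕜[X])
    (k : ℕ) : iteratedDeriv k (fun x => f.eval x) = fun x => (derivative^[k] f).eval x := by
  rw [iteratedDeriv_eq_iterate]
  induction k generalizing f with
  | zero => rfl
  | succ k ih =>
    rw [Function.iterate_succ_apply, Function.iterate_succ_apply, ← ih]
    congr 1
    funext x
    exact f.deriv

theorem Polynomial.taylor_mean_remainder_lagrange_one (f : ℝ[X]) {a b : ℝ} (hab : a ≠ b) :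
    ∃ ξ ∈ Set.uIoo a b, f.eval b =
      f.eval a + f.derivative.eval a * (b - a) + (derivative^[2] f).eval ξ * (b - a) ^ 2 / 2 := by
  have hf : ContDiff ℝ ((1 : ℕ) + 1) (fun x => f.eval x) := by
    exact_mod_cast f.contDiff_aeval (𝕜 := ℝ) _
  obtain ⟨ξ, hξ, h⟩ := taylor_mean_remainder_lagrange_iteratedDeriv hab hf.contDiffOn
  refine ⟨ξ, hξ, ?_⟩
  rw [iteratedDeriv_eval, taylorWithinEval_succ, taylor_within_zero_eval, iteratedDerivWithin_one,
    f.derivWithin (uniqueDiffOn_uIcc hab a Set.left_mem_uIcc)] at h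
  norm_num at h
  rw [Function.iterate_succ_apply, Function.iterate_one]
  linear_combination h

theorem Nat.prod_range_odd_mul_two_pow_mul_factorial (k : ℕ) :
    (∏ l ∈ range k, (2 * l + 1)) * (2 ^ k * k !) = (2 * k)! := by
  induction k with
  | zero => rfl
  | succ k ih =>
    rw [prod_range_succ, pow_succ, Nat.factorial_succ, show 2 * (k + 1) = 2 * k + 1 + 1 by ring,
      Nat.factorial_succ, Nat.factorial_succ, ← ih]
    ring

theorem prod_range_sq_sub_sq_mul_factorial {n j : ℕ} (h : j < n) :
    (∏ l ∈ range (j + 1), ((n : ℤ) ^ 2 - l ^ 2)) * (n - j - 1)! = n * (n + j)! := by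
  induction j with
  | zero =>
    obtain ⟨m, rfl⟩ : ∃ m, n = m + 1 := ⟨n - 1, by omega⟩
    rw [prod_range_one, show m + 1 - 0 - 1 = m by omega, Nat.factorial_succ]
    push_cast
    ring
  | succ j ih =>
    obtain ⟨m, rfl⟩ : ∃ m, n = m + j + 2 := ⟨n - j - 2, by omega⟩
    have ih := ih (by omega)
    rw [show m + j + 2 - j - 1 = m + 1 by omega, Nat.factorial_succ] at ih
    rw [prod_range_succ, show m + j + 2 - (j + 1) - 1 = m by omega,
      show m + j + 2 + (j + 1) = m + j + 2 + j + 1 by ring, Nat.factorial_succ]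
    push_cast at ih ⊢
    linear_combination (2 * (j : ℤ) + m + 3) * ih

theorem alphaLTS_eq_iterate_derivative_T_eval_one {p j : ℕ} (hj : j < p) :
    alphaLTS p j = (derivative^[j + 1] (T ℝ p)).eval 1 / (j + 1)! * (-1 / 2) ^ (j + 1) := by
  have hodd := Nat.prod_range_odd_mul_two_pow_mul_factorial (j + 1)
  have hsq : ((∏ l ∈ range (j + 1), ((p : ℤ) ^ 2 - l ^ 2) : ℤ) : ℝ) * (p - j - 1)! =
      p * (p + j)! :=
    mod_cast prod_range_sq_sub_sq_mul_factorial hj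
  rw [iterate_derivative_T_eval_one_eq_div, alphaLTS, show 2 * j + 2 = 2 * (j + 1) by ring,
    ← hodd, mul_assoc, ← hsq]
  push_cast
  rw [div_pow]
  field_simp

theorem sq_mul_sum_alphaLTS {p : ℕ} (hp : 2 ≤ p) (x : ℝ) :
    x ^ 2 * ∑ j ∈ Icc 1 (p - 1), alphaLTS p j * x ^ (j - 1) =
      (T ℝ p).eval (1 - x / 2) - 1 + p ^ 2 * x / 2 := by
  rw [eval_eq_sum_range_iterate_derivative (n := p) (by simp [natDegree_T]) 1]
  obtain ⟨q, rfl⟩ : ∃ q, p = q + 2 := ⟨p - 2, by omega⟩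
  have hshift (f : ℕ → ℝ) :
      ∑ j ∈ Icc 1 (q + 1), f j = ∑ i ∈ range (q + 1), f (i + 1) := by
    rw [range_eq_Ico, sum_Ico_add', zero_add, Ico_add_one_right_eq_Icc]
  rw [sum_range_succ', sum_range_succ', show q + 2 - 1 = q + 1 by omega, hshift, mul_sum]
  have hcoeff : ∀ i ∈ range (q + 1), x ^ 2 * (alphaLTS (q + 2) (i + 1) * x ^ (i + 1 - 1)) =
      (derivative^[i + 1 + 1] (T ℝ (q + 2 : ℕ))).eval 1 / (i + 1 + 1)! *
        (1 - x / 2 - 1) ^ (i + 1 + 1) := by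
    intro i hi
    rw [alphaLTS_eq_iterate_derivative_T_eval_one (by simp at hi; omega),
      show 1 - x / 2 - 1 = -1 / 2 * x by ring, mul_pow, Nat.add_sub_cancel]
    ring
  rw [sum_congr rfl hcoeff]
  simp only [zero_add, Function.iterate_zero_apply, Function.iterate_one, T_eval_one,
    derivative_T_eval_one, Nat.factorial_zero, Nat.factorial_one, pow_zero, pow_one]
  push_cast
  ring

theorem iterate_derivative_two_T_eval_one {𝔽 : Type*} [Field 𝔽] [CharZero 𝔽] (n : ℤ) :
    (derivative^[2] (T 𝔽 n)).eval 1 = n ^ 2 * (n ^ 2 - 1) / 3 := by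
  rw [iterate_derivative_T_eval_one_eq_div]
  simp [prod_range_succ]

theorem alphaLTS_sum_bound' (p : ℕ) (hp : 2 ≤ p) (κ : ℝ)
    (hκ : κ ∈ Set.Ioc (0 : ℝ) (4 * (p : ℝ) ^ 2)) :
    |2 / (p : ℝ) ^ 2 *
        ∑ j ∈ Finset.Icc 1 (p - 1), alphaLTS p j * (κ / (p : ℝ) ^ 2) ^ (j - 1)| ≤
      ((p : ℝ) ^ 2 - 1) / 12 := by
  obtain ⟨hκ0, hκ4⟩ := hκ
  have hp2 : (0 : ℝ) < p ^ 2 := pow_pos (by exact_mod_cast (by omega : 0 < p)) 2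
  set x := κ / (p : ℝ) ^ 2 with hx
  have hx0 : 0 < x := div_pos hκ0 hp2
  have hx4 : x ≤ 4 := by rw [hx, div_le_iff₀ hp2]; linarith
  obtain ⟨ξ, hξ, hTaylor⟩ :=
    (T ℝ p).taylor_mean_remainder_lagrange_one (a := 1) (b := 1 - x / 2) (by linarith)
  rw [T_eval_one, derivative_T_eval_one] at hTaylor
  have hξ : |ξ| ≤ 1 := by
    rw [Set.uIoo_of_ge (by linarith)] at hξ
    exact abs_le.2 ⟨by linarith [hξ.1], hξ.2.le⟩
  have hsum : ∑ j ∈ Icc 1 (p - 1), alphaLTS p j * x ^ (j - 1) =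
      (derivative^[2] (T ℝ p)).eval ξ / 8 := by
    apply mul_left_cancel₀ (pow_ne_zero 2 hx0.ne')
    rw [sq_mul_sum_alphaLTS hp, hTaylor]
    push_cast
    ring
  have hT2 := (abs_iterate_derivative_T_real_le p 2 hξ).trans_eq
    (iterate_derivative_two_T_eval_one (p : ℤ))
  push_cast at hT2
  rw [hsum, abs_mul, abs_div, abs_of_pos hp2, abs_two, abs_div,
    abs_of_pos (by norm_num : (0 : ℝ) < 8)]
  calc 2 / (p : ℝ) ^ 2 * (|(derivative^[2] (T ℝ p)).eval ξ| / 8)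
      ≤ 2 / (p : ℝ) ^ 2 * ((p : ℝ) ^ 2 * ((p : ℝ) ^ 2 - 1) / 3 / 8) := by gcongr
    _ = ((p : ℝ) ^ 2 - 1) / 12 := by field_simp; ring
end

section
/- For $p \geq 2$ and coefficients $\alpha_j^p = \frac{(-1)^{j+1} p(p+j)!}{(p-j-1)!(2j+2)!}$, the polynomial identity $\sum_{j=1}^{p-1} \alpha_j^p x^{j-1} = \frac{p^2 x + 2 T_p(1 - x/2) - 2}{2x^2}$ holds for all $x \neq 0$, where $T_p$ is the Chebyshev polynomial of the first kind of degree $p$. -/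
open Finset Polynomial

theorem Nat.choose_add_two_add_choose (m i : ℕ) :
    (m + 2).choose (i + 2) + m.choose (i + 2) = 2 * (m + 1).choose (i + 2) + m.choose i := by
  rw [Nat.choose_succ_succ' (m + 1), Nat.choose_succ_succ' m i, Nat.choose_succ_succ' m (i + 1)]
  ring

theorem sum_Icc_one_eq_sum_range {M : Type*} [AddCommMonoid M] (f : ℕ → M) (n : ℕ) :
    ∑ j ∈ Icc 1 n, f j = ∑ j ∈ range n, f (j + 1) := by
  rw [← Ico_add_one_right_eq_Icc, sum_Ico_eq_sum_range, Nat.add_sub_cancel]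
  simp only [add_comm]

section ShiftedChebyshevV

variable {R : Type*} [CommRing R]

variable (R) in
/-- `Vₙ(1 - X/2)`, where `Vₙ` is the Chebyshev polynomial of the third kind. -/
noncomputable def shiftedChebyshevV (n : ℕ) : R[X] :=
  ∑ k ∈ range (n + 1), monomial k ((-1) ^ k * ((n + k).choose (2 * k) : R))

theorem coeff_shiftedChebyshevV (n k : ℕ) :
    (shiftedChebyshevV R n).coeff k = (-1) ^ k * ((n + k).choose (2 * k) : R) := by
  simp only [shiftedChebyshevV, finsetSum_coeff, coeff_monomial, sum_ite_eq', mem_range]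
  split_ifs with hk
  · rfl
  · rw [Nat.choose_eq_zero_of_lt (by omega), Nat.cast_zero, mul_zero]

theorem eval_shiftedChebyshevV (n : ℕ) (x : R) :
    (shiftedChebyshevV R n).eval x =
      ∑ k ∈ range (n + 1), (-1) ^ k * ((n + k).choose (2 * k) : R) * x ^ k := by
  simp [shiftedChebyshevV, eval_finsetSum]

theorem shiftedChebyshevV_zero : shiftedChebyshevV R 0 = 1 := by
  simp [shiftedChebyshevV]

theorem shiftedChebyshevV_one : shiftedChebyshevV R 1 = 1 - X := by
  simp [shiftedChebyshevV, sum_range_succ, monomial_one_one_eq_X, sub_eq_add_neg]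

theorem shiftedChebyshevV_add_two (n : ℕ) :
    shiftedChebyshevV R (n + 2) = (2 - X) * shiftedChebyshevV R (n + 1) - shiftedChebyshevV R n := by
  ext (_ | k)
  · norm_num [coeff_shiftedChebyshevV]
  · simp only [coeff_shiftedChebyshevV, coeff_sub, sub_mul, coeff_X_mul, coeff_ofNat_mul]
    have h := congrArg (Nat.cast : ℕ → R) (Nat.choose_add_two_add_choose (n + k + 1) (2 * k))
    push_cast at h
    ring_nf at h ⊢
    linear_combination -(-1) ^ k * h

theorem chebyshevC_comp_two_sub_X (n : ℕ) :
    (Chebyshev.C R (n + 1)).comp (2 - X) = shiftedChebyshevV R (n + 1) + shiftedChebyshevV R n := by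
  induction n using Nat.twoStepInduction with
  | zero =>
    simp only [Nat.cast_zero, zero_add, Chebyshev.C_one, X_comp, shiftedChebyshevV_one,
      shiftedChebyshevV_zero]
    ring
  | one =>
    rw [shiftedChebyshevV_add_two, shiftedChebyshevV_one, shiftedChebyshevV_zero]
    simp only [Nat.cast_one, Int.reduceAdd, Chebyshev.C_two, sub_comp, pow_comp, X_comp,
      ofNat_comp]
    ring
  | more n ih1 ih2 =>
    push_cast at ih1 ih2 ⊢
    rw [show (n : ℤ) + 2 + 1 = n + 1 + 2 by ring, Chebyshev.C_add_two, sub_comp, mul_comp,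
      X_comp, ih2, ih1, shiftedChebyshevV_add_two (n + 1), shiftedChebyshevV_add_two n]
    ring

theorem two_mul_eval_chebyshevT {x y : R} (hxy : 2 * y = 2 - x) (n : ℕ) :
    2 * (Chebyshev.T R (n + 1 : ℕ)).eval y =
      (shiftedChebyshevV R (n + 1) + shiftedChebyshevV R n).eval x := by
  have h := congrArg (eval y) (Chebyshev.C_comp_two_mul_X R (n + 1 : ℕ))
  simp only [eval_comp, eval_mul, eval_X, eval_ofNat] at h
  rw [← h, ← chebyshevC_comp_two_sub_X, eval_comp, hxy]
  simp

end ShiftedChebyshevV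

theorem two_mul_alphaLTS {p j : ℕ} (hj : j < p) :
    2 * alphaLTS p j =
      (-1) ^ (j + 1) * (((p + j + 1).choose (2 * j + 2) : ℝ) + (p + j).choose (2 * j + 2)) := by
  obtain ⟨m, rfl⟩ : ∃ m, p = m + j + 1 := ⟨p - j - 1, by omega⟩
  have hfac := Nat.choose_mul_factorial_mul_factorial (show 2 * j + 2 ≤ m + j + 1 + j + 1 by omega)
  have hsucc := Nat.choose_mul_succ_eq (m + j + 1 + j) (2 * j + 2)
  rw [show m + j + 1 + j + 1 - (2 * j + 2) = m by omega] at hfac hsucc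
  rw [Nat.factorial_succ (m + j + 1 + j)] at hfac
  rw [alphaLTS, show m + j + 1 - j - 1 = m by omega]
  rify at hfac hsucc
  push_cast
  field_simp
  refine mul_left_cancel₀ (show (m + j + 1 + j + 1 : ℝ) ≠ 0 by positivity) ?_
  linear_combination
    -(m.factorial * (2 * j + 2).factorial : ℝ) * hsucc - 2 * (m + j + 1 : ℝ) * hfac

theorem alphaLTS_zero {p : ℕ} (hp : 0 < p) : alphaLTS p 0 = -p ^ 2 / 2 := by
  obtain ⟨m, rfl⟩ : ∃ m, p = m + 1 := ⟨p - 1, by omega⟩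
  rw [alphaLTS, show m + 1 - 0 - 1 = m by omega, show 2 * 0 + 2 = 2 from rfl, Nat.factorial_two,
    add_zero, Nat.factorial_succ]
  push_cast
  field_simp

theorem eval_shiftedChebyshevV_add_shiftedChebyshevV (n : ℕ) (x : ℝ) :
    (shiftedChebyshevV ℝ (n + 1) + shiftedChebyshevV ℝ n).eval x =
      2 + ∑ j ∈ range (n + 1), 2 * alphaLTS (n + 1) j * x ^ (j + 1) := by
  have hlast : (-1) ^ (n + 1) * ((n + (n + 1)).choose (2 * (n + 1)) : ℝ) * x ^ (n + 1) = 0 := by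
    rw [Nat.choose_eq_zero_of_lt (by omega), Nat.cast_zero, mul_zero, zero_mul]
  rw [eval_add, eval_shiftedChebyshevV, eval_shiftedChebyshevV,
    ← add_zero (∑ k ∈ range (n + 1), _), ← hlast, ← sum_range_succ, ← sum_add_distrib,
    sum_range_succ', add_comm]
  congr 1
  · norm_num
  refine sum_congr rfl fun j hj => ?_
  rw [two_mul_alphaLTS (mem_range.mp hj)]
  ring_nf

theorem alphaLTS_generating_function'_general (p : ℕ) (x : ℝ) (hx : x ≠ 0) :
    ∑ j ∈ Finset.Icc 1 (p - 1), alphaLTS p j * x ^ (j - 1) =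
      ((p : ℝ) ^ 2 * x + 2 * (Polynomial.Chebyshev.T ℝ (p : ℤ)).eval (1 - x / 2) - 2) /
        (2 * x ^ 2) := by
  rcases p with _ | n
  · simp
  rw [eq_div_iff (by positivity), two_mul_eval_chebyshevT (by ring),
    eval_shiftedChebyshevV_add_shiftedChebyshevV, sum_range_succ', alphaLTS_zero n.succ_pos,
    Nat.add_sub_cancel, sum_Icc_one_eq_sum_range, sum_mul]
  have hshift : ∑ j ∈ range n, 2 * alphaLTS (n + 1) (j + 1) * x ^ (j + 1 + 1) =
      ∑ j ∈ range n, alphaLTS (n + 1) (j + 1) * x ^ (j + 1 - 1) * (2 * x ^ 2) :=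
    sum_congr rfl fun _ _ => by rw [Nat.add_sub_cancel]; ring
  rw [hshift]
  push_cast
  ring

theorem alphaLTS_generating_function' (p : ℕ) (hp : 2 ≤ p) (x : ℝ) (hx : x ≠ 0) :
    ∑ j ∈ Finset.Icc 1 (p - 1), alphaLTS p j * x ^ (j - 1) =
      ((p : ℝ) ^ 2 * x + 2 * (Polynomial.Chebyshev.T ℝ (p : ℤ)).eval (1 - x / 2) - 2) /
        (2 * x ^ 2) :=
  alphaLTS_generating_function'_general p x hx
end
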